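/- For every hash sequence of n cars on m places with 1 ≤ n < m, the visit counts satisfy the cyclic recursion H_{k+1} = Y_{k+1} + (H_k − 1)_+ for every k ∈ {1,…,m}, with the cyclic convention that the equation for k = m reads H_1 = Y_1 + (H_m − 1)_+, where x_+ = max(x,0). -/

import Mathlib

open MeasureTheory Filter
open scoped BigOperators

attribute [local instance] Classical.propDecidable

namespace Parking

variable {m : ℕ}

/-- Final parking spot of a car whose first try is place `s`, given the set `occ`
of currently occupied places (places are cyclic, i.e. elements of `ZMod m`). -/
noncomputable def spot (occ : Finset (ZMod m)) (s : ZMod m) : ZMod m :=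
  if h : ∃ t : ℕ, s + (t : ZMod m) ∉ occ then s + ((Nat.find h : ℕ) : ZMod m) else s

/-- Set of occupied places after the first `k` cars of the hash sequence `p` have parked. -/
noncomputable def occs (p : ℕ → ZMod m) : ℕ → Finset (ZMod m)
  | 0 => ∅
  | k + 1 => insert (spot (occs p k) (p k)) (occs p k)

/-- Number of consecutive occupied places starting at `x` (0 if `x` is empty). -/
noncomputable def runLen (occ : Finset (ZMod m)) (x : ZMod m) : ℕ :=
  if h : ∃ t : ℕ, x + (t : ZMod m) ∉ occ then Nat.find h else 0

/-- First place of the block of consecutive occupied places containing `x`. -/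
noncomputable def blockStart (occ : Finset (ZMod m)) (x : ZMod m) : ZMod m :=
  if h : ∃ t : ℕ, x - ((t : ZMod m) + 1) ∉ occ then x - ((Nat.find h : ℕ) : ZMod m) else x

/-- Starting places of the blocks of consecutive occupied places. -/
noncomputable def blockStarts (occ : Finset (ZMod m)) : Finset (ZMod m) :=
  occ.filter (fun x => x - 1 ∉ occ)

/-- The multiset of sizes of the blocks of consecutive occupied places. -/
noncomputable def blockSizes (occ : Finset (ZMod m)) : Multiset ℕ :=
  (blockStarts occ).val.map (runLen occ)

/-- `B n p k` : size of the `k`-th largest block (1-indexed, `0` if there are fewer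
than `k` blocks) once the `n` first cars of the hash sequence `p` have parked. -/
noncomputable def B (n : ℕ) (p : ℕ → ZMod m) (k : ℕ) : ℕ :=
  ((Multiset.sort (blockSizes (occs p n)) (· ≤ ·)).reverse).getD (k - 1) 0

/-- `R n p k` : size of the `k`-th block (1-indexed, `0` if there are fewer than `k`
blocks), blocks being sorted by increasing date of birth (increasing order of the first
arrival of a car of the block), once the `n` first cars of `p` have parked. -/
noncomputable def R (n : ℕ) (p : ℕ → ZMod m) (k : ℕ) : ℕ :=
  (((((List.range n).map
        (fun i => blockStart (occs p n) (spot (occs p i) (p i)))).reverse.dedup).reverse).map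
      (runLen (occs p n))).getD (k - 1) 0

/-- Number of places tried by car `i` beyond its first try. -/
noncomputable def offs (p : ℕ → ZMod m) (i : ℕ) : ℕ :=
  if h : ∃ t : ℕ, p i + (t : ZMod m) ∉ occs p i then Nat.find h else 0

/-- `H n p y` : number of cars among the `n` first cars of `p` that tried place `y`,
successfully or not. -/
noncomputable def H (n : ℕ) (p : ℕ → ZMod m) (y : ZMod m) : ℕ :=
  ((Finset.range n).filter (fun i => ∃ t : ℕ, t ≤ offs p i ∧ p i + (t : ZMod m) = y)).card

/-- `Y n p k` : number of cars whose first try is place `k` (periodic in `k`). -/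
noncomputable def Y (n : ℕ) (p : ℕ → ZMod m) (k : ℤ) : ℕ :=
  ((Finset.range n).filter (fun i => p i = (k : ZMod m))).card

/-- `A n p k = Y₁ + ⋯ + Y_k - k n / m`. -/
noncomputable def A (n : ℕ) (p : ℕ → ZMod m) (k : ℕ) : ℝ :=
  (∑ j ∈ Finset.range k, (Y n p (j + 1) : ℝ)) - (k : ℝ) * n / m

/-- `V n p` : the smallest `j ∈ {1, …, m}` at which `A` attains its minimum over `{1, …, m}`. -/
noncomputable def V (n : ℕ) (p : ℕ → ZMod m) : ℕ :=
  sInf {j | 1 ≤ j ∧ j ≤ m ∧ ∀ i, 1 ≤ i → i ≤ m → A n p j ≤ A n p i}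

/-- `C n p k = Y₁ + ⋯ + Y_k - k` for `0 ≤ k ≤ m`, extended to `ℤ` by `C (k + m) = C k - ℓ`. -/
noncomputable def C (n : ℕ) (p : ℕ → ZMod m) (k : ℤ) : ℤ :=
  ((∑ j ∈ Finset.range (k.emod m).toNat, (Y n p (j + 1) : ℤ)) - ((k.emod m).toNat : ℤ))
    - k.ediv m * ((m : ℤ) - (n : ℤ))

/-- Extension of a hash sequence `Fin n → Fin m` to a map `ℕ → ZMod m`. -/
def ext (m n : ℕ) (p : Fin n → Fin m) : ℕ → ZMod m :=
  fun i => if h : i < n then (((p ⟨i, h⟩) : ℕ) : ZMod m) else 0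

/-- Probability of an event under the uniform distribution on the `m ^ n` hash sequences. -/
noncomputable def parkProb (m n : ℕ) (ev : (ℕ → ZMod m) → Prop) : ℝ :=
  ((Finset.univ.filter (fun p : Fin n → Fin m => ev (ext m n p))).card : ℝ) / (m : ℝ) ^ n

/-- Expectation of a random variable under the uniform distribution on hash sequences. -/
noncomputable def parkExp (m n : ℕ) (X : (ℕ → ZMod m) → ℝ) : ℝ :=
  (∑ p : Fin n → Fin m, X (ext m n p)) / (m : ℝ) ^ n

/-- `φ(M,N,K) = binom(N−1,K−1) (K+1)^{K−1} M (M−K−1)^{N−K−1} (M−N−1) / M^N`. -/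
noncomputable def phi (M N K : ℕ) : ℝ :=
  (Nat.choose (N - 1) (K - 1) : ℝ) * ((K : ℝ) + 1) ^ (K - 1) * (M : ℝ)
      * ((M - K - 1 : ℕ) : ℝ) ^ (N - K - 1) * ((M - N - 1 : ℕ) : ℝ) / (M : ℝ) ^ N

/-- The density `f(λ,x) = (λ/√(2π)) x^{−1/2} (1−x)^{−3/2} exp(−λ²x/(2(1−x)))` on `(0,1)`. -/
noncomputable def fdens (l x : ℝ) : ℝ :=
  if 0 < x ∧ x < 1 then
    l / Real.sqrt (2 * Real.pi) * x ^ (-(1 : ℝ) / 2) * (1 - x) ^ (-(3 : ℝ) / 2)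
      * Real.exp (-(l ^ 2 * x) / (2 * (1 - x)))
  else 0

/-!
A car tries place `y + 1` exactly when it starts there or passes through `y` without parking,
and the cars trying `y` are those passing through it together with those parking at it. Distinct
cars park at distinct places, and if some car tries `y` then some car parks at `y`: either that
car, or an earlier one that already occupied `y`. So exactly `min (H y) 1` of the cars trying `y`
park there, and the other `H y - 1` go on to `y + 1`. Fewer than `m` places are ever occupied, so
no probe sequence wraps around the whole circle; this keeps both decompositions disjoint.
-/

open Finset

variable {p : ℕ → ZMod m}

lemma card_occs_le (p : ℕ → ZMod m) (i : ℕ) : #(occs p i) ≤ i := by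
  induction i with
  | zero => simp [occs]
  | succ i ih => exact (card_insert_le _ _).trans (by omega)

lemma spot_occs (p : ℕ → ZMod m) (i : ℕ) : spot (occs p i) (p i) = p i + offs p i := by
  unfold spot offs
  split_ifs <;> simp

lemma mem_occs {x : ZMod m} {i : ℕ} : x ∈ occs p i ↔ ∃ j < i, p j + offs p j = x := by
  induction i with
  | zero => simp [occs]
  | succ i ih =>
    rw [occs, mem_insert, ih, spot_occs, Nat.exists_lt_succ_right, eq_comm, or_comm]

lemma exists_lt_add_notMem_occs {i : ℕ} (hi : i < m) :
    ∃ t < m, p i + (t : ZMod m) ∉ occs p i := by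
  have : NeZero m := ⟨by omega⟩
  obtain ⟨x, -, hx⟩ := exists_mem_notMem_of_card_lt_card (s := occs p i) (t := univ)
    (by rw [card_univ, ZMod.card]; exact (card_occs_le p i).trans_lt hi)
  exact ⟨(x - p i).val, ZMod.val_lt _, by rwa [ZMod.natCast_zmod_val, add_sub_cancel]⟩

lemma add_offs_notMem_occs {i : ℕ} (hi : i < m) : p i + (offs p i : ZMod m) ∉ occs p i := by
  obtain ⟨t, -, ht⟩ := exists_lt_add_notMem_occs (p := p) hi
  have h : ∃ t : ℕ, p i + (t : ZMod m) ∉ occs p i := ⟨t, ht⟩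
  rw [offs, dif_pos h]
  exact Nat.find_spec h

lemma add_mem_occs_of_lt_offs {i t : ℕ} (ht : t < offs p i) : p i + (t : ZMod m) ∈ occs p i := by
  rw [offs] at ht
  split_ifs at ht with h
  · exact not_not.mp (Nat.find_min h ht)
  · omega

lemma offs_lt {i : ℕ} (hi : i < m) : offs p i < m := by
  obtain ⟨t, htm, ht⟩ := exists_lt_add_notMem_occs (p := p) hi
  have h : ∃ t : ℕ, p i + (t : ZMod m) ∉ occs p i := ⟨t, ht⟩
  rw [offs, dif_pos h]
  exact (Nat.find_min' h ht).trans_lt htm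

lemma add_offs_injOn (p : ℕ → ZMod m) :
    Set.InjOn (fun i => p i + (offs p i : ZMod m)) (Set.Iio m) := by
  suffices h : ∀ {i j}, i < j → j < m → p i + (offs p i : ZMod m) ≠ p j + offs p j by
    intro i hi j hj hij
    by_contra hne
    rcases Nat.lt_or_gt_of_ne hne with hlt | hlt
    exacts [h hlt hj hij, h hlt hi hij.symm]
  intro i j hij hj h
  exact add_offs_notMem_occs hj (mem_occs.mpr ⟨i, hij, h⟩)

def Tries (p : ℕ → ZMod m) (y : ZMod m) (i : ℕ) : Prop :=
  ∃ t ≤ offs p i, p i + (t : ZMod m) = y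

def PassesThrough (p : ℕ → ZMod m) (y : ZMod m) (i : ℕ) : Prop :=
  ∃ t < offs p i, p i + (t : ZMod m) = y

lemma H_eq_card_tries (n : ℕ) (p : ℕ → ZMod m) (y : ZMod m) :
    H n p y = #{i ∈ range n | Tries p y i} := by
  rw [H]
  congr

lemma tries_iff {y : ZMod m} {i : ℕ} :
    Tries p y i ↔ PassesThrough p y i ∨ p i + (offs p i : ZMod m) = y := by
  constructor
  · rintro ⟨t, ht, hty⟩
    rcases ht.lt_or_eq with ht | rfl
    exacts [Or.inl ⟨t, ht, hty⟩, Or.inr hty]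
  · rintro (⟨t, ht, hty⟩ | h)
    exacts [⟨t, ht.le, hty⟩, ⟨_, le_rfl, h⟩]

lemma tries_add_one_iff {y : ZMod m} {i : ℕ} :
    Tries p (y + 1) i ↔ p i = y + 1 ∨ PassesThrough p y i := by
  constructor
  · rintro ⟨_ | t, ht, hty⟩
    · exact Or.inl (by simpa using hty)
    · exact Or.inr ⟨t, ht, by push_cast at hty; linear_combination hty⟩
  · rintro (h | ⟨t, ht, hty⟩)
    · exact ⟨0, Nat.zero_le _, by simpa using h⟩
    · exact ⟨t + 1, ht, by push_cast; linear_combination hty⟩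

lemma PassesThrough.add_offs_ne {y : ZMod m} {i : ℕ} (hi : i < m) (h : PassesThrough p y i) :
    p i + (offs p i : ZMod m) ≠ y := by
  obtain ⟨t, ht, rfl⟩ := h
  intro heq
  have := (ZMod.natCast_eq_natCast_iff' _ _ _).mp (add_left_cancel heq)
  rw [Nat.mod_eq_of_lt (offs_lt hi), Nat.mod_eq_of_lt (ht.trans (offs_lt hi))] at this
  omega

lemma not_passesThrough_of_eq_add_one {y : ZMod m} {i : ℕ} (hi : i < m) (h : p i = y + 1) :
    ¬ PassesThrough p y i := by
  rintro ⟨t, ht, hty⟩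
  have h0 : ((t + 1 : ℕ) : ZMod m) = 0 := by
    push_cast
    linear_combination hty - h
  have := Nat.le_of_dvd t.succ_pos ((ZMod.natCast_eq_zero_iff _ _).mp h0)
  have := offs_lt (p := p) hi
  omega

lemma exists_le_add_offs_eq_of_tries {y : ZMod m} {i : ℕ} (h : Tries p y i) :
    ∃ j ≤ i, p j + (offs p j : ZMod m) = y := by
  rcases tries_iff.mp h with ⟨t, ht, rfl⟩ | h
  · obtain ⟨j, hj, hjy⟩ := mem_occs.mp (add_mem_occs_of_lt_offs ht)
    exact ⟨j, hj.le, hjy⟩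
  · exact ⟨i, le_rfl, h⟩

end Parking

lemma Finset.card_filter_eq_add_of_iff {α : Type*} {s : Finset α} {P Q R : α → Prop}
    [DecidableEq α] [DecidablePred P] [DecidablePred Q] [DecidablePred R]
    (hP : ∀ x ∈ s, P x ↔ Q x ∨ R x) (hQR : ∀ x ∈ s, Q x → ¬ R x) :
    (s.filter P).card = (s.filter Q).card + (s.filter R).card := by
  rw [← card_union_of_disjoint (disjoint_filter.mpr hQR), ← filter_or]
  exact congrArg card (filter_congr hP)

namespace Parking

open Finset

variable {m n : ℕ} {p : ℕ → ZMod m}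

theorem H_add_one (hn : n < m) (y : ZMod m) :
    H n p (y + 1) = #{i ∈ range n | p i = y + 1} + (H n p y - 1) := by
  have hm : ∀ i ∈ range n, i < m := fun i hi => (mem_range.mp hi).trans hn
  rw [H_eq_card_tries, H_eq_card_tries]
  have hstep : #{i ∈ range n | Tries p (y + 1) i} =
      #{i ∈ range n | p i = y + 1} + #{i ∈ range n | PassesThrough p y i} :=
    card_filter_eq_add_of_iff (fun _ _ => tries_add_one_iff)
      (fun i hi => not_passesThrough_of_eq_add_one (hm i hi))
  have hsplit : #{i ∈ range n | Tries p y i} = #{i ∈ range n | PassesThrough p y i} +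
      #{i ∈ range n | p i + (offs p i : ZMod m) = y} :=
    card_filter_eq_add_of_iff (fun _ _ => tries_iff) (fun i hi h => h.add_offs_ne (hm i hi))
  have hparked_le : #{i ∈ range n | p i + (offs p i : ZMod m) = y} ≤ 1 := by
    refine card_le_one.mpr fun i hi j hj => ?_
    rw [mem_filter] at hi hj
    exact add_offs_injOn p (hm i hi.1) (hm j hj.1) (hi.2.trans hj.2.symm)
  have hparked_pos : #{i ∈ range n | Tries p y i} ≠ 0 →
      #{i ∈ range n | p i + (offs p i : ZMod m) = y} ≠ 0 := by
    intro hy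
    obtain ⟨i, hi⟩ := card_ne_zero.mp hy
    rw [mem_filter, mem_range] at hi
    obtain ⟨j, hji, hj⟩ := exists_le_add_offs_eq_of_tries hi.2
    exact card_ne_zero_of_mem (mem_filter.mpr ⟨mem_range.mpr (hji.trans_lt hi.1), hj⟩)
  omega

theorem H_cyclic_recursion_general
    (m n : ℕ) (h2 : n < m) (p : ℕ → ZMod m)
    (k : ℕ) :
    H n p (((k + 1 : ℕ)) : ZMod m) = Y n p ((k : ℤ) + 1) + (H n p ((k : ℕ) : ZMod m) - 1) := by
  rw [Nat.cast_succ, H_add_one h2]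
  simp [Y]

/-- Cyclic recursion for the visit counts: `H_{k+1} = Y_{k+1} + (H_k − 1)₊`
for `k ∈ {1, …, m}`, the case `k = m` reading `H₁ = Y₁ + (H_m − 1)₊`.
(In `ℕ`, truncated subtraction `H k - 1` is exactly `(H k − 1)₊`.) -/
theorem H_cyclic_recursion
    (m n : ℕ) (h1 : 1 ≤ n) (h2 : n < m) (p : ℕ → ZMod m)
    (k : ℕ) (hk : k ∈ Finset.Icc 1 m) :
    H n p (((k + 1 : ℕ)) : ZMod m) = Y n p ((k : ℤ) + 1) + (H n p ((k : ℕ) : ZMod m) - 1) :=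
  H_cyclic_recursion_general m n h2 p k
end Parking
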